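/- For every candidate set C ⊆ S, LB_1(C) ≤ LB_3(C). -/

import Mathlib

/-!
Formalization of guessing games (Wordle-style), following the paper's definitions:
guesses `G`, secrets `S ⊆ G`, responses `R` with `|R| > 1`, affirmative response
`r* ∈ R`, and an answering function `a` with `a(g,s) = r* ↔ g = s`.
-/

structure GuessingGame (α ρ : Type*) [DecidableEq α] [DecidableEq ρ] where
  G : Finset α
  S : Finset α
  R : Finset ρ
  rstar : ρ
  ans : α → α → ρ
  S_subset_G : S ⊆ G
  one_lt_card_R : 1 < R.card
  rstar_mem : rstar ∈ R
  ans_mem : ∀ g ∈ G, ∀ s ∈ S, ans g s ∈ R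
  ans_eq_rstar_iff : ∀ g ∈ G, ∀ s ∈ S, (ans g s = rstar ↔ g = s)

namespace GuessingGame

variable {α ρ : Type*} [DecidableEq α] [DecidableEq ρ] (gm : GuessingGame α ρ)

/-- The split `C_{g,r} = {c ∈ C : a(g,c) = r}`. -/
def split (C : Finset α) (g : α) (r : ρ) : Finset α :=
  C.filter fun c => gm.ans g c = r

/-- `nSplits(g,C) = |{r ∈ R : C_{g,r} ≠ ∅}|`. -/
def nSplits (g : α) (C : Finset α) : ℕ :=
  (gm.R.filter fun r => (gm.split C g r).Nonempty).card

/-- The useful guesses `UG(C)`: for `|C| > 1` the guesses `g ∈ G` with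
`nSplits(g,C) ≠ 1`; for `|C| ≤ 1`, `UG(C) = C`. -/
def UG (C : Finset α) : Finset α :=
  if 1 < C.card then gm.G.filter fun g => gm.nSplits g C ≠ 1 else C

/-- `MaxSplits(C) = max_{g ∈ G} nSplits(g,C)`. -/
def MaxSplits (C : Finset α) : ℕ :=
  gm.G.sup fun g => gm.nSplits g C

end GuessingGame

/-- `Bound(n,b)`: `Bound(0,b) = 0`, `Bound(n,1) = n(n+1)/2`, and for `n > 0`, `b > 1`,
`Bound(n,b) = Σ_{i=1}^{k} i·b^{i-1} + (k+1)·(n - (b^k - 1)/(b-1))` where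
`k = ⌊log_b (n(b-1)+1)⌋`. -/
def Bound (n b : ℕ) : ℕ :=
  if n = 0 then 0
  else if b = 1 then n * (n + 1) / 2
  else
    (∑ i ∈ Finset.range (Nat.log b (n * (b - 1) + 1)), (i + 1) * b ^ i) +
      (Nat.log b (n * (b - 1) + 1) + 1) *
        (n - (b ^ Nat.log b (n * (b - 1) + 1) - 1) / (b - 1))

namespace GuessingGame

variable {α ρ : Type*} [DecidableEq α] [DecidableEq ρ] (gm : GuessingGame α ρ)

/-- Fuel-based implementation of the well-founded recursion defining `MinTotal`:
`MinTotal(∅) = 0` and for nonempty `C`,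
`MinTotal(C) = min_{g ∈ UG(C)} (|C| + Σ_{r ∈ R \ {r*}} MinTotal(C_{g,r}))`.
Fuel `|C|` suffices since for a useful guess every split is a proper subset of `C`. -/
noncomputable def MinTotalAux : ℕ → Finset α → ℕ
  | 0, _ => 0
  | n + 1, C =>
    if C = ∅ then 0
    else
      sInf (↑((gm.UG C).image fun g =>
        C.card + ∑ r ∈ gm.R.erase gm.rstar, MinTotalAux n (gm.split C g r)) : Set ℕ)

/-- `MinTotal(C)`. -/
noncomputable def MinTotal (C : Finset α) : ℕ :=
  gm.MinTotalAux C.card C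

/-- `V*(g,C) = |C| + Σ_{r ∈ R \ {r*}} MinTotal(C_{g,r})`. -/
noncomputable def Vstar (g : α) (C : Finset α) : ℕ :=
  C.card + ∑ r ∈ gm.R.erase gm.rstar, gm.MinTotal (gm.split C g r)

/-- The lower bounds `LB_i` (`i ≥ 1`; `LB 0` is junk):
`LB_1(C) = Bound(|C|, MaxSplits(S))`, `LB_2(C) = Bound(|C|, MaxSplits(C))`, and for
`i ≥ 1`, `LB_{i+2}(∅) = 0` and `LB_{i+2}(C) = min_{g ∈ UG(C)} V_i(g,C)` for nonempty `C`,
where `V_i(g,C) = |C| + Σ_{r ∈ R \ {r*}} LB_i(C_{g,r})`. -/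
noncomputable def LB : ℕ → Finset α → ℕ
  | 0, _ => 0
  | 1, C => Bound C.card (gm.MaxSplits gm.S)
  | 2, C => Bound C.card (gm.MaxSplits C)
  | n + 3, C =>
    if C = ∅ then 0
    else
      sInf (↑((gm.UG C).image fun g =>
        C.card + ∑ r ∈ gm.R.erase gm.rstar, LB (n + 1) (gm.split C g r)) : Set ℕ)

/-- `V_i(g,C) = |C| + Σ_{r ∈ R \ {r*}} LB_i(C_{g,r})`. -/
noncomputable def V (i : ℕ) (g : α) (C : Finset α) : ℕ :=
  C.card + ∑ r ∈ gm.R.erase gm.rstar, gm.LB i (gm.split C g r)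

end GuessingGame

/-!
Read `Bound n b` level by level: in a `b`-ary tree at most `1 + b + ⋯ + b^(i-1)` nodes have depth
`< i`, so `Bound n b = ∑_{i<n} (n - (1 + b + ⋯ + b^(i-1)))`, the sum over levels `i` of the least
number of nodes at depth `≥ i`. A guess `g ∈ G` splits `C` into pieces of sizes `m_r` with
`m_{r*} ≤ 1` and at most `b = MaxSplits(S)` of them nonempty. Since
`1 + b + ⋯ + b^i = 1 + b (1 + ⋯ + b^(i-1))`, the level-`(i+1)` term for `C` is at most the sum of the
level-`i` terms for the pieces `r ≠ r*`; summing over `i` gives `Bound |C| b ≤ V_1(g, C)`.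
-/

open Finset

namespace Bound

def levelCap (b i : ℕ) : ℕ := ∑ t ∈ range i, b ^ t

def levelSum (n b : ℕ) : ℕ := ∑ i ∈ range n, (n - levelCap b i)

variable {b : ℕ}

theorem levelCap_succ (b i : ℕ) : levelCap b (i + 1) = 1 + b * levelCap b i := by
  rw [levelCap, geom_sum_succ, add_comm, levelCap]

theorem levelCap_mono (b : ℕ) : Monotone (levelCap b) := fun _ _ h =>
  sum_le_sum_of_subset (range_subset_range.mpr h)

theorem le_levelCap (hb : 1 ≤ b) (i : ℕ) : i ≤ levelCap b i := by
  simpa [levelCap] using card_nsmul_le_sum (range i) (b ^ ·) 1 fun t _ => Nat.one_le_pow _ _ hb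

theorem sum_range_tsub_levelCap (hb : 1 ≤ b) {m N : ℕ} (h : m ≤ levelCap b N) :
    ∑ i ∈ range N, (m - levelCap b i) = levelSum m b := by
  have vanish : ∀ M, ∀ i ∈ range M, i ∉ range (min m N) → m - levelCap b i = 0 := by
    intro M i _ hi
    rcases min_le_iff.mp (not_lt.mp (mem_range.not.mp hi)) with hmi | hNi
    · exact Nat.sub_eq_zero_of_le (hmi.trans (le_levelCap hb i))
    · exact Nat.sub_eq_zero_of_le (h.trans (levelCap_mono b hNi))
  rw [levelSum, ← sum_subset (range_subset_range.mpr (min_le_right m N)) (vanish N),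
    ← sum_subset (range_subset_range.mpr (min_le_left m N)) (vanish m)]

theorem sum_range_succ_tsub_levelCap {n k : ℕ} (h : levelCap b k ≤ n) :
    ∑ i ∈ range (k + 1), (n - levelCap b i) =
      ∑ i ∈ range k, (i + 1) * b ^ i + (k + 1) * (n - levelCap b k) := by
  induction k with
  | zero => simp [levelCap]
  | succ k ih =>
    have hcap : levelCap b (k + 1) = levelCap b k + b ^ k := sum_range_succ _ _
    rw [sum_range_succ _ (k + 1), ih (levelCap_mono b k.le_succ |>.trans h),
      sum_range_succ _ k, show n - levelCap b k = b ^ k + (n - levelCap b (k + 1)) by omega]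
    ring

theorem levelSum_one (n : ℕ) : levelSum n 1 = n * (n + 1) / 2 := by
  have hsum : levelSum n 1 = ∑ i ∈ range (n + 1), i := by
    rw [sum_range_succ', ← sum_range_reflect]
    refine (sum_congr rfl fun i hi => ?_).trans (add_zero _).symm
    simp only [levelCap, one_pow, sum_const, card_range, smul_eq_mul, mul_one]
    have := mem_range.mp hi
    omega
  rw [hsum, sum_range_id, Nat.add_sub_cancel, mul_comm]

theorem eq_levelSum (hb : 1 ≤ b) (n : ℕ) : Bound n b = levelSum n b := by
  rcases Nat.eq_zero_or_pos n with rfl | hn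
  · simp [Bound, levelSum]
  rcases hb.eq_or_lt with rfl | hb
  · rw [Bound, if_neg hn.ne', if_pos rfl, levelSum_one]
  obtain ⟨c, rfl⟩ : ∃ c, b = c + 1 := ⟨b - 1, by omega⟩
  set k := Nat.log (c + 1) (n * c + 1)
  have hgeom (i : ℕ) : levelCap (c + 1) i * c + 1 = (c + 1) ^ i := geom_sum_mul_add c i
  have hk_le : (c + 1) ^ k ≤ n * c + 1 := Nat.pow_log_le_self _ (by omega)
  have hk_lt : n * c + 1 < (c + 1) ^ (k + 1) := Nat.lt_pow_succ_log_self (by omega) _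
  have hcap_le : levelCap (c + 1) k ≤ n :=
    Nat.le_of_mul_le_mul_right (by linarith [hgeom k]) (by omega : 0 < c)
  have hcap_lt : n < levelCap (c + 1) (k + 1) :=
    Nat.lt_of_mul_lt_mul_right (a := c) (by linarith [hgeom (k + 1)])
  have hdiv : ((c + 1) ^ k - 1) / c = levelCap (c + 1) k := by
    rw [← hgeom k, Nat.add_sub_cancel, Nat.mul_div_cancel _ (by omega)]
  rw [Bound, if_neg hn.ne', if_neg (by omega), Nat.add_sub_cancel, hdiv,
    ← sum_range_succ_tsub_levelCap hcap_le, sum_range_tsub_levelCap (by omega) hcap_lt.le]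

/-- The level-by-level form of `Bound |C| b ≤ V_1(g, C)`, for pieces of sizes `m r`. -/
theorem levelSum_le_add_sum {ρ : Type*} [DecidableEq ρ] (R : Finset ρ) {r₀ : ρ} (m : ρ → ℕ)
    (hb : 1 ≤ b) (hr₀ : r₀ ∈ R) (hm₀ : m r₀ ≤ 1) (hnonzero : #{r ∈ R | m r ≠ 0} ≤ b) :
    levelSum (∑ r ∈ R, m r) b ≤ ∑ r ∈ R, m r + ∑ r ∈ R.erase r₀, levelSum (m r) b := by
  set n := ∑ r ∈ R, m r
  set E := R.erase r₀
  have level (i : ℕ) : n - levelCap b (i + 1) ≤ ∑ r ∈ E, (m r - levelCap b i) := by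
    set L := levelCap b i
    set P := {r ∈ E | m r ≠ 0}
    have hP : #P ≤ b :=
      (card_le_card (filter_subset_filter _ (erase_subset r₀ R))).trans hnonzero
    have hsplit : n = m r₀ + ∑ r ∈ P, m r := by
      rw [sum_filter_ne_zero, add_comm, sum_erase_add R m hr₀]
    have hpieces : ∑ r ∈ P, m r ≤ ∑ r ∈ E, (m r - L) + b * L :=
      calc ∑ r ∈ P, m r ≤ ∑ r ∈ P, ((m r - L) + L) := sum_le_sum fun r _ => by omega
        _ = ∑ r ∈ P, (m r - L) + #P * L := by rw [sum_add_distrib, sum_const, smul_eq_mul]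
        _ ≤ ∑ r ∈ E, (m r - L) + b * L := add_le_add
          (sum_le_sum_of_subset (filter_subset _ _)) (Nat.mul_le_mul_right L hP)
    have hcap : levelCap b (i + 1) = 1 + b * L := levelCap_succ b i
    rw [hcap]
    omega
  have hn_le (r : ρ) (hr : r ∈ E) : m r ≤ levelCap b n :=
    (single_le_sum (fun _ _ => Nat.zero_le _) (mem_of_mem_erase hr)).trans (le_levelCap hb n)
  calc levelSum n b = ∑ i ∈ range (n + 1), (n - levelCap b i) :=
        (sum_range_tsub_levelCap hb (n.le_succ.trans (le_levelCap hb (n + 1)))).symm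
    _ = ∑ i ∈ range n, (n - levelCap b (i + 1)) + n := by simp [sum_range_succ', levelCap]
    _ ≤ ∑ i ∈ range n, ∑ r ∈ E, (m r - levelCap b i) + n := by gcongr with i; exact level i
    _ = n + ∑ r ∈ E, levelSum (m r) b := by
        rw [sum_comm, add_comm]
        exact congrArg _ (sum_congr rfl fun r hr => sum_range_tsub_levelCap hb (hn_le r hr))

end Bound

namespace GuessingGame

variable {α ρ : Type*} [DecidableEq α] [DecidableEq ρ] (gm : GuessingGame α ρ)
  {C D : Finset α} {g : α}

theorem sum_card_split (hC : C ⊆ gm.S) (hg : g ∈ gm.G) :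
    ∑ r ∈ gm.R, #(gm.split C g r) = #C :=
  (card_eq_sum_card_fiberwise fun c hc => gm.ans_mem g hg c (hC hc)).symm

theorem card_split_rstar_le_one (hC : C ⊆ gm.S) (hg : g ∈ gm.G) :
    #(gm.split C g gm.rstar) ≤ 1 := by
  refine card_le_one.mpr fun c hc c' hc' => ?_
  simp only [split, mem_filter] at hc hc'
  rw [← (gm.ans_eq_rstar_iff g hg c (hC hc.1)).mp hc.2,
    ← (gm.ans_eq_rstar_iff g hg c' (hC hc'.1)).mp hc'.2]

theorem mem_split_self (hg : g ∈ gm.S) (hgC : g ∈ C) : g ∈ gm.split C g gm.rstar :=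
  mem_filter.mpr ⟨hgC, (gm.ans_eq_rstar_iff g (gm.S_subset_G hg) g hg).mpr rfl⟩

theorem nSplits_mono (g : α) (hCD : C ⊆ D) : gm.nSplits g C ≤ gm.nSplits g D :=
  card_le_card fun _ hr => by
    simp only [mem_filter] at hr ⊢
    exact ⟨hr.1, hr.2.mono (filter_subset_filter _ hCD)⟩

theorem nSplits_le_MaxSplits (hg : g ∈ gm.G) : gm.nSplits g C ≤ gm.MaxSplits C :=
  le_sup (f := fun g => gm.nSplits g C) hg

theorem nSplits_pos (hC : C ⊆ gm.S) (hg : g ∈ gm.G) (hne : C.Nonempty) :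
    0 < gm.nSplits g C := by
  obtain ⟨c, hc⟩ := hne
  exact card_pos.mpr ⟨gm.ans g c,
    mem_filter.mpr ⟨gm.ans_mem g hg c (hC hc), c, mem_filter.mpr ⟨hc, rfl⟩⟩⟩

theorem one_lt_nSplits (hC : C ⊆ gm.S) (hg : g ∈ C) {c : α} (hc : c ∈ C) (hcg : c ≠ g) :
    1 < gm.nSplits g C := by
  have hgG := gm.S_subset_G (hC hg)
  refine one_lt_card.mpr ⟨gm.rstar, ?_, gm.ans g c, ?_, fun h => hcg ?_⟩
  · exact mem_filter.mpr ⟨gm.rstar_mem, g, gm.mem_split_self (hC hg) hg⟩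
  · exact mem_filter.mpr ⟨gm.ans_mem g hgG c (hC hc), c, mem_filter.mpr ⟨hc, rfl⟩⟩
  · exact ((gm.ans_eq_rstar_iff g hgG c (hC hc)).mp h.symm).symm

theorem UG_subset_G (hC : C ⊆ gm.S) : gm.UG C ⊆ gm.G := by
  unfold UG
  split_ifs
  · exact filter_subset _ _
  · exact hC.trans gm.S_subset_G

theorem UG_nonempty (hC : C ⊆ gm.S) (hne : C.Nonempty) : (gm.UG C).Nonempty := by
  unfold UG
  split_ifs with h
  · -- a secret of `C` separates itself from any other element of `C`
    obtain ⟨g, hg⟩ := hne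
    obtain ⟨c, hc, hcg⟩ := exists_mem_ne h g
    exact ⟨g, mem_filter.mpr ⟨gm.S_subset_G (hC hg), (gm.one_lt_nSplits hC hg hc hcg).ne'⟩⟩
  · exact hne

theorem LB_add_three (i : ℕ) (hC : C.Nonempty) :
    gm.LB (i + 3) C = sInf (((gm.UG C).image fun g => gm.V (i + 1) g C : Finset ℕ) : Set ℕ) := by
  rw [LB, if_neg hC.ne_empty]
  rfl

theorem LB_one_le_V_one (hC : C ⊆ gm.S) (hg : g ∈ gm.G) : gm.LB 1 C ≤ gm.V 1 g C := by
  rcases C.eq_empty_or_nonempty with rfl | hne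
  · simp [LB, Bound]
  have hb : 1 ≤ gm.MaxSplits gm.S :=
    (gm.nSplits_pos hC hg hne).trans_le
      ((gm.nSplits_mono g hC).trans (gm.nSplits_le_MaxSplits hg))
  have hnonzero : #{r ∈ gm.R | #(gm.split C g r) ≠ 0} ≤ gm.MaxSplits gm.S := by
    simp only [card_ne_zero]
    exact (gm.nSplits_mono g hC).trans (gm.nSplits_le_MaxSplits hg)
  have key := Bound.levelSum_le_add_sum gm.R (fun r => #(gm.split C g r)) hb gm.rstar_mem
    (gm.card_split_rstar_le_one hC hg) hnonzero
  rw [gm.sum_card_split hC hg] at key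
  simpa only [LB, V, Bound.eq_levelSum hb] using key

end GuessingGame

section Statements

open GuessingGame

variable {α ρ : Type*} [DecidableEq α] [DecidableEq ρ]

theorem statement_13 (gm : GuessingGame α ρ) (C : Finset α) (hCS : C ⊆ gm.S) :
    gm.LB 1 C ≤ gm.LB 3 C := by
  rcases C.eq_empty_or_nonempty with rfl | hne
  · simp [LB, Bound]
  rw [gm.LB_add_three 0 hne]
  obtain ⟨g, hg⟩ := gm.UG_nonempty hCS hne
  refine le_csInf ⟨_, mem_coe.mpr (mem_image_of_mem _ hg)⟩ ?_
  simp only [coe_image, Set.forall_mem_image, mem_coe]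
  exact fun g hg => gm.LB_one_le_V_one hCS (gm.UG_subset_G hCS hg)

end Statements
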